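/- Under the conditions of Lemma 4 (i.i.d. FGM pairs (X_i,Y_i) with marginals F, G ∈ 𝓢(γ), γ ≥ 0, parameter θ ∈ [-1,1]), for any n ≥ 2 and m ≥ 2 there exists a constant C > 1 such that (1/C) F̄(x)Ḡ(y) ≤ P(S_n > x, T_m > y) ≤ C F̄(x)Ḡ(y) for all sufficiently large x and y, where S_n = Σ_{i=1}^n X_i and T_m = Σ_{i=1}^m Y_i. -/

import Mathlib

open MeasureTheory Filter Real Set Asymptotics
open scoped ENNReal

/-- Tail of a distribution (measure) on ℝ. -/
noncomputable def mtail (μ : Measure ℝ) (x : ℝ) : ℝ := (μ (Set.Ioi x)).toReal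

/-- The exponential-like-tailed class 𝓛(γ). -/
def memL (μ : Measure ℝ) (γ : ℝ) : Prop :=
  ∀ y : ℝ, Tendsto (fun x => mtail μ (x - y) / mtail μ x) atTop (nhds (Real.exp (γ * y)))

/-- V̂(γ) = ∫ e^{γ x} V(dx). -/
noncomputable def mgfAt (μ : Measure ℝ) (γ : ℝ) : ℝ := ∫ x, Real.exp (γ * x) ∂μ

/-- The convolution-equivalent class 𝓢(γ). -/
def memS (μ : Measure ℝ) (γ : ℝ) : Prop :=
  memL μ γ ∧
    Tendsto (fun x => mtail (Measure.conv μ μ) x / mtail μ x) atTop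
      (nhds (2 * mgfAt μ γ))

section Aux

lemma mtail_nonneg (μ : Measure ℝ) (x : ℝ) : 0 ≤ mtail μ x := ENNReal.toReal_nonneg

lemma mtail_anti (μ : Measure ℝ) [IsProbabilityMeasure μ] : Antitone (mtail μ) := by
  intro a b hab
  exact ENNReal.toReal_mono (measure_ne_top _ _) (measure_mono (Set.Ioi_subset_Ioi hab))

lemma mtail_eq_ofReal (μ : Measure ℝ) [IsProbabilityMeasure μ] (x : ℝ) :
    μ (Set.Ioi x) = ENNReal.ofReal (mtail μ x) := by
  rw [mtail, ENNReal.ofReal_toReal (measure_ne_top _ _)]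

/-- Positivity of the tail for distributions in 𝓛(γ). -/
lemma mtail_pos {μ : Measure ℝ} [IsProbabilityMeasure μ] {γ : ℝ} (h : memL μ γ) (x : ℝ) :
    0 < mtail μ x := by
  by_contra hx
  push_neg at hx
  have hx0 : mtail μ x = 0 := le_antisymm hx (mtail_nonneg μ x)
  have hz : ∀ z ≥ x, mtail μ z = 0 := fun z hz =>
    le_antisymm (hx0 ▸ mtail_anti μ hz) (mtail_nonneg μ z)
  have h1 := h 1
  have h2 : Tendsto (fun z : ℝ => mtail μ (z - 1) / mtail μ z) atTop (nhds 0) := by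
    refine Tendsto.congr' ?_ (tendsto_const_nhds : Tendsto (fun _ : ℝ => (0:ℝ)) atTop _)
    filter_upwards [eventually_ge_atTop (x + 1)] with z hzx
    rw [hz (z - 1) (by linarith), zero_div]
  have := tendsto_nhds_unique h1 h2
  exact (Real.exp_pos (γ * 1)).ne' this

/-- From an eventual tail-ratio bound, a global domination of measures. -/
lemma global_dom (V F : Measure ℝ) [IsProbabilityMeasure V] [IsProbabilityMeasure F]
    (hpos : ∀ x, 0 < mtail F x) (M c : ℝ)
    (hev : ∀ x ≥ M, mtail V x ≤ c * mtail F x) :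
    ∃ D : ℝ≥0∞, D ≠ ⊤ ∧ ∀ x, V (Set.Ioi x) ≤ D * F (Set.Ioi x) := by
  set c' : ℝ := max c (1 / mtail F M) with hc'
  refine ⟨ENNReal.ofReal c', ENNReal.ofReal_ne_top, fun x => ?_⟩
  have hreal : mtail V x ≤ c' * mtail F x := by
    rcases le_or_gt M x with hMx | hxM
    · exact le_trans (hev x hMx) (mul_le_mul_of_nonneg_right (le_max_left _ _)
        (mtail_nonneg F x))
    · have h1 : mtail V x ≤ 1 := by
        rw [mtail]
        exact ENNReal.toReal_le_of_le_ofReal zero_le_one (by simpa using prob_le_one)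
      have h2 : mtail F M ≤ mtail F x := mtail_anti F hxM.le
      have h3 : (0:ℝ) < mtail F M := hpos M
      have : (1:ℝ) ≤ (1 / mtail F M) * mtail F x := by
        rw [div_mul_eq_mul_div, one_mul, le_div_iff₀ h3]
        linarith
      calc mtail V x ≤ 1 := h1
        _ ≤ (1 / mtail F M) * mtail F x := this
        _ ≤ c' * mtail F x := mul_le_mul_of_nonneg_right (le_max_right _ _) (mtail_nonneg F x)
  rw [mtail_eq_ofReal V, mtail_eq_ofReal F, ← ENNReal.ofReal_mul (le_max_of_le_right (one_div_nonneg.mpr (hpos M).le))]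
  exact ENNReal.ofReal_le_ofReal hreal

/-- Tail of a convolution. -/
lemma conv_Ioi (V W : Measure ℝ) [SFinite V] [SFinite W] (x : ℝ) :
    (V.conv W) (Set.Ioi x) = ∫⁻ t, W (Set.Ioi (x - t)) ∂V := by
  have hadd : Measurable fun p : ℝ × ℝ => p.1 + p.2 := measurable_add
  rw [Measure.conv, Measure.map_apply hadd measurableSet_Ioi,
    Measure.prod_apply (hadd measurableSet_Ioi)]
  refine lintegral_congr fun t => ?_
  congr 1
  ext s
  simp only [Set.mem_preimage, Set.mem_Ioi]
  constructor <;> intro <;> linarith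

end Aux

-- continuation: appended to aux.lean for testing
section Aux2

/-- Iterated convolution power of a measure on ℝ. -/
noncomputable def iterConv (F : Measure ℝ) : ℕ → Measure ℝ
  | 0 => Measure.dirac 0
  | n+1 => (iterConv F n).conv F

instance iterConv_prob (F : Measure ℝ) [IsProbabilityMeasure F] (n : ℕ) :
    IsProbabilityMeasure (iterConv F n) := by
  induction n with
  | zero => exact Measure.dirac.isProbabilityMeasure
  | succ k ih => exact Measure.probabilitymeasure_of_probabilitymeasures_conv _ _

lemma iterConv_one (F : Measure ℝ) [IsProbabilityMeasure F] : iterConv F 1 = F := by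
  show (iterConv F 0).conv F = F
  show (Measure.dirac 0).conv F = F
  exact Measure.dirac_zero_conv F

lemma measurable_tail_shift (W : Measure ℝ) (x : ℝ) :
    Measurable fun t : ℝ => W (Set.Ioi (x - t)) := by
  have h1 : Antitone fun u : ℝ => W (Set.Ioi u) :=
    fun a b hab => measure_mono (Set.Ioi_subset_Ioi hab)
  exact h1.measurable.comp (measurable_const.sub measurable_id)

lemma iterConv_dom (F : Measure ℝ) [IsProbabilityMeasure F] {D : ℝ≥0∞}
    (hDt : D ≠ ⊤) (hD1 : 1 ≤ D)
    (hD : ∀ x, (F.conv F) (Set.Ioi x) ≤ D * F (Set.Ioi x)) :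
    ∀ n, 1 ≤ n → ∀ x, (iterConv F n) (Set.Ioi x) ≤ D ^ n * F (Set.Ioi x) := by
  intro n
  induction n with
  | zero => omega
  | succ k ih =>
    intro _ x
    rcases Nat.eq_zero_or_pos k with hk | hk
    · subst hk
      rw [iterConv_one]
      calc F (Set.Ioi x) = 1 * F (Set.Ioi x) := (one_mul _).symm
        _ ≤ D ^ 1 * F (Set.Ioi x) := by
            exact mul_le_mul_left (by simpa using hD1) _
    · have step : (iterConv F (k+1)) (Set.Ioi x) = ∫⁻ t, (iterConv F k) (Set.Ioi (x - t)) ∂F := by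
        show ((iterConv F k).conv F) (Set.Ioi x) = _
        rw [Measure.conv_comm, conv_Ioi]
      rw [step]
      calc ∫⁻ t, (iterConv F k) (Set.Ioi (x - t)) ∂F
          ≤ ∫⁻ t, D ^ k * F (Set.Ioi (x - t)) ∂F :=
            lintegral_mono fun t => ih hk (x - t)
        _ = D ^ k * ∫⁻ t, F (Set.Ioi (x - t)) ∂F :=
            lintegral_const_mul' _ _ (ENNReal.pow_ne_top hDt)
        _ = D ^ k * (F.conv F) (Set.Ioi x) := by rw [conv_Ioi]
        _ ≤ D ^ k * (D * F (Set.Ioi x)) := mul_le_mul_right (hD x) _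
        _ = D ^ (k+1) * F (Set.Ioi x) := by ring

/-- tail shift comparison from membership in 𝓛(γ). -/
lemma memL_shift {μ : Measure ℝ} [IsProbabilityMeasure μ] {γ : ℝ} (h : memL μ γ) (a : ℝ) :
    ∃ c > (0:ℝ), ∃ M : ℝ, ∀ x ≥ M, c * mtail μ x ≤ mtail μ (x + a) := by
  have h1 := h (-a)
  simp only [sub_neg_eq_add] at h1
  have hL : (0:ℝ) < Real.exp (γ * -a) := Real.exp_pos _
  have h2 : ∀ᶠ x in atTop, Real.exp (γ * -a) / 2 ≤ mtail μ (x + a) / mtail μ x :=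
    h1.eventually_const_le (by linarith)
  obtain ⟨M, hM⟩ := h2.exists_forall_of_atTop
  refine ⟨Real.exp (γ * -a) / 2, by positivity, M, fun x hx => ?_⟩
  have hpos := mtail_pos h x
  have := hM x hx
  rw [le_div_iff₀ hpos] at this
  linarith

/-- Choosing a point where the left tail is small. -/
lemma Iic_small (H : Measure ℝ) [IsProbabilityMeasure H] :
    ∃ c : ℝ, 0 < c ∧ (H (Set.Iic (-c))).toReal ≤ 1/4 := by
  have hanti : Antitone fun n : ℕ => Set.Iic (-(n:ℝ)) := fun i j hij =>
    Set.Iic_subset_Iic.mpr (neg_le_neg (Nat.cast_le.mpr hij))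
  have hInter : ⋂ n : ℕ, Set.Iic (-(n:ℝ)) = ∅ := by
    ext z
    simp only [Set.mem_iInter, Set.mem_Iic, Set.mem_empty_iff_false, iff_false, not_forall,
      not_le]
    obtain ⟨n, hn⟩ := exists_nat_gt (-z)
    exact ⟨n, by linarith⟩
  have htend : Tendsto (fun n : ℕ => H (Set.Iic (-(n:ℝ)))) atTop (nhds 0) := by
    have := tendsto_measure_iInter_atTop (μ := H) (s := fun n : ℕ => Set.Iic (-(n:ℝ)))
      (fun n => (measurableSet_Iic).nullMeasurableSet) hanti ⟨0, measure_ne_top _ _⟩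
    rwa [hInter, measure_empty] at this
  have : ∀ᶠ n : ℕ in atTop, H (Set.Iic (-(n:ℝ))) < ENNReal.ofReal (1/4) := by
    exact htend.eventually_lt_const (by norm_num)
  obtain ⟨N, hN⟩ := this.exists_forall_of_atTop
  refine ⟨(N:ℝ) + 1, by positivity, ?_⟩
  have h1 : H (Set.Iic (-((N:ℝ)+1))) ≤ H (Set.Iic (-(N:ℝ))) :=
    measure_mono (Set.Iic_subset_Iic.mpr (by linarith))
  have h2 := (h1.trans_lt (hN N le_rfl)).le
  calc (H (Set.Iic (-((N:ℝ)+1)))).toReal ≤ (ENNReal.ofReal (1/4)).toReal :=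
        ENNReal.toReal_mono ENNReal.ofReal_ne_top h2
    _ = 1/4 := by norm_num

end Aux2

section Aux3

open ProbabilityTheory in
/-- Independence decoupling of one coordinate from a function of the earlier coordinates. -/
lemma strip_map {Ω : Type*} [MeasurableSpace Ω] (P : Measure Ω) [IsProbabilityMeasure P]
    (Z : ℕ → Ω → ℝ × ℝ) (hZ : ∀ i, Measurable (Z i))
    (hind : ProbabilityTheory.iIndepFun Z P)
    (j : ℕ) {β α : Type*} [MeasurableSpace α] [MeasurableSpace β]
    (f : ℝ × ℝ → β) (hf : Measurable f)
    (g : (↥(Finset.range j) → ℝ × ℝ) → α) (hg : Measurable g) :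
    Measure.map (fun ω => (f (Z j ω), g (fun i => Z (↑i) ω))) P
      = (Measure.map (fun ω => f (Z j ω)) P).prod
          (Measure.map (fun ω => g (fun i => Z (↑i) ω)) P) := by
  have hdisj : Disjoint ({j} : Finset ℕ) (Finset.range j) := by
    simp [Finset.disjoint_left]
  have h1 := hind.indepFun_finset {j} (Finset.range j) hdisj hZ
  have hφ : Measurable fun v : (↥({j} : Finset ℕ) → ℝ × ℝ) =>
      f (v ⟨j, Finset.mem_singleton_self j⟩) := hf.comp (measurable_pi_apply _)
  have h2 := h1.comp hφ hg
  have hmg : Measurable fun ω => g (fun i => Z (↑i) ω) :=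
    hg.comp (measurable_pi_lambda _ fun i => hZ _)
  exact (ProbabilityTheory.indepFun_iff_map_prod_eq_prod_map_map
    ((hf.comp (hZ j)).aemeasurable) hmg.aemeasurable).mp h2

end Aux3

set_option maxHeartbeats 2000000 in
theorem stmt16 {Ω : Type*} [MeasurableSpace Ω] (P : Measure Ω) [IsProbabilityMeasure P]
    (X Y : ℕ → Ω → ℝ)
    (hmeas : ∀ i, Measurable (fun ω => (X i ω, Y i ω)))
    (hindep : ProbabilityTheory.iIndepFun
      (fun i ω => (X i ω, Y i ω)) P)
    (μ : Measure (ℝ × ℝ)) (hid : ∀ i, Measure.map (fun ω => (X i ω, Y i ω)) P = μ)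
    (F G : Measure ℝ) [IsProbabilityMeasure F] [IsProbabilityMeasure G]
    (hmargF : μ.map Prod.fst = F) (hmargG : μ.map Prod.snd = G)
    (γ : ℝ) (hγ : 0 ≤ γ) (hSF : memS F γ) (hSG : memS G γ)
    (θ : ℝ) (hθ : θ ∈ Set.Icc (-1 : ℝ) 1)
    (hFGM : ∀ x y : ℝ, (μ (Set.Iic x ×ˢ Set.Iic y)).toReal
      = (F (Set.Iic x)).toReal * (G (Set.Iic y)).toReal
        * (1 + θ * mtail F x * mtail G y))
    (n m : ℕ) (hn : 2 ≤ n) (hm : 2 ≤ m) :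
    ∃ C : ℝ, 1 < C ∧ ∃ M : ℝ, ∀ x ≥ M, ∀ y ≥ M,
      (1 / C) * (mtail F x * mtail G y)
          ≤ (P {ω | x < ∑ i ∈ Finset.range n, X i ω
              ∧ y < ∑ i ∈ Finset.range m, Y i ω}).toReal
        ∧ (P {ω | x < ∑ i ∈ Finset.range n, X i ω
              ∧ y < ∑ i ∈ Finset.range m, Y i ω}).toReal
          ≤ C * (mtail F x * mtail G y) := by
  classical
  obtain ⟨hθ1, hθ2⟩ := hθ
  have hXm : ∀ i, Measurable (X i) := fun i => measurable_fst.comp (hmeas i)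
  have hYm : ∀ i, Measurable (Y i) := fun i => measurable_snd.comp (hmeas i)
  have hSm : ∀ k, Measurable fun ω => ∑ i ∈ Finset.range k, X i ω :=
    fun k => Finset.measurable_sum _ fun i _ => hXm i
  have hTm : ∀ k, Measurable fun ω => ∑ i ∈ Finset.range k, Y i ω :=
    fun k => Finset.measurable_sum _ fun i _ => hYm i
  haveI hμprob : IsProbabilityMeasure μ := by
    rw [← hid 0]; exact Measure.isProbabilityMeasure_map (hmeas 0).aemeasurable
  have hFset : ∀ s : Set ℝ, MeasurableSet s → μ (s ×ˢ (Set.univ : Set ℝ)) = F s := by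
    intro s hs
    rw [← hmargF, Measure.map_apply measurable_fst hs, Set.prod_univ]
  have hGset : ∀ s : Set ℝ, MeasurableSet s → μ ((Set.univ : Set ℝ) ×ˢ s) = G s := by
    intro s hs
    rw [← hmargG, Measure.map_apply measurable_snd hs, Set.univ_prod]
  -- complement relation
  have hcF : ∀ a : ℝ, (F (Set.Iic a)).toReal = 1 - mtail F a := by
    intro a
    have h1 : F (Set.Iic a) + F (Set.Ioi a) = 1 := by
      rw [← measure_union (Set.Iic_disjoint_Ioi le_rfl) measurableSet_Ioi,
        Set.Iic_union_Ioi, measure_univ]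
    have h2 : (F (Set.Iic a)).toReal + (F (Set.Ioi a)).toReal = 1 := by
      rw [← ENNReal.toReal_add (measure_ne_top _ _) (measure_ne_top _ _), h1, ENNReal.toReal_one]
    simpa [mtail] using by linarith
  have hcG : ∀ a : ℝ, (G (Set.Iic a)).toReal = 1 - mtail G a := by
    intro a
    have h1 : G (Set.Iic a) + G (Set.Ioi a) = 1 := by
      rw [← measure_union (Set.Iic_disjoint_Ioi le_rfl) measurableSet_Ioi,
        Set.Iic_union_Ioi, measure_univ]
    have h2 : (G (Set.Iic a)).toReal + (G (Set.Ioi a)).toReal = 1 := by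
      rw [← ENNReal.toReal_add (measure_ne_top _ _) (measure_ne_top _ _), h1, ENNReal.toReal_one]
    simpa [mtail] using by linarith
  -- the survival function of the FGM joint distribution
  have hrectR : ∀ a b : ℝ, (μ (Set.Ioi a ×ˢ Set.Ioi b)).toReal
      = mtail F a * mtail G b
        * (1 + θ * (F (Set.Iic a)).toReal * (G (Set.Iic b)).toReal) := by
    intro a b
    have hd1 : Disjoint (Set.Iic a ×ˢ Set.Iic b) (Set.Iic a ×ˢ Set.Ioi b) := by
      rw [Set.disjoint_left]
      rintro ⟨p, q⟩ ⟨-, (h1 : q ≤ b)⟩ ⟨-, (h2 : b < q)⟩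
      exact absurd h2 (not_lt.mpr h1)
    have hd2 : Disjoint (Set.Iic a ×ˢ Set.Ioi b) (Set.Ioi a ×ˢ Set.Ioi b) := by
      rw [Set.disjoint_left]
      rintro ⟨p, q⟩ ⟨(h1 : p ≤ a), -⟩ ⟨(h2 : a < p), -⟩
      exact absurd h2 (not_lt.mpr h1)
    have e1 : μ (Set.Iic a ×ˢ Set.Iic b) + μ (Set.Iic a ×ˢ Set.Ioi b) = F (Set.Iic a) := by
      rw [← measure_union hd1 (measurableSet_Iic.prod measurableSet_Ioi), ← Set.prod_union,
        Set.Iic_union_Ioi]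
      exact hFset _ measurableSet_Iic
    have e2 : μ (Set.Iic a ×ˢ Set.Ioi b) + μ (Set.Ioi a ×ˢ Set.Ioi b) = G (Set.Ioi b) := by
      rw [← measure_union hd2 (measurableSet_Ioi.prod measurableSet_Ioi), ← Set.union_prod,
        Set.Iic_union_Ioi]
      exact hGset _ measurableSet_Ioi
    have e1' : (μ (Set.Iic a ×ˢ Set.Iic b)).toReal + (μ (Set.Iic a ×ˢ Set.Ioi b)).toReal
        = (F (Set.Iic a)).toReal := by
      rw [← ENNReal.toReal_add (measure_ne_top _ _) (measure_ne_top _ _), e1]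
    have e2' : (μ (Set.Iic a ×ˢ Set.Ioi b)).toReal + (μ (Set.Ioi a ×ˢ Set.Ioi b)).toReal
        = mtail G b := by
      rw [← ENNReal.toReal_add (measure_ne_top _ _) (measure_ne_top _ _), e2]; rfl
    have e0 := hFGM a b
    have hua := hcF a
    have hvb := hcG b
    set u := (F (Set.Iic a)).toReal
    set v := (G (Set.Iic b)).toReal
    -- from e1', e2', e0 : r11 = mtail G b - (u - r00)
    have : (μ (Set.Ioi a ×ˢ Set.Ioi b)).toReal
        = mtail G b - u + u * v * (1 + θ * mtail F a * mtail G b) := by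
      rw [← e0]; linarith
    rw [this, hua, hvb]
    ring
  -- positivity of tails
  have hFpos : ∀ x, 0 < mtail F x := mtail_pos hSF.1
  have hGpos : ∀ x, 0 < mtail G x := mtail_pos hSG.1
  -- upper bound for the joint survival rectangle
  have hrectU : ∀ a b : ℝ, μ (Set.Ioi a ×ˢ Set.Ioi b)
      ≤ 2 * (F (Set.Ioi a) * G (Set.Ioi b)) := by
    intro a b
    have hfin : (2:ℝ≥0∞) * (F (Set.Ioi a) * G (Set.Ioi b)) ≠ ⊤ :=
      ENNReal.mul_ne_top ENNReal.ofNat_ne_top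
        (ENNReal.mul_ne_top (measure_ne_top _ _) (measure_ne_top _ _))
    rw [← ENNReal.toReal_le_toReal (measure_ne_top _ _) hfin, hrectR a b, ENNReal.toReal_mul,
      ENNReal.toReal_mul]
    have h2 : (2:ℝ≥0∞).toReal = 2 := by simp
    rw [h2]
    have hu0 : 0 ≤ (F (Set.Iic a)).toReal := ENNReal.toReal_nonneg
    have hv0 : 0 ≤ (G (Set.Iic b)).toReal := ENNReal.toReal_nonneg
    have hu1 : (F (Set.Iic a)).toReal ≤ 1 := by rw [hcF]; linarith [mtail_nonneg F a]
    have hv1 : (G (Set.Iic b)).toReal ≤ 1 := by rw [hcG]; linarith [mtail_nonneg G b]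
    have hf0 : 0 ≤ mtail F a := mtail_nonneg F a
    have hg0 : 0 ≤ mtail G b := mtail_nonneg G b
    have hmf : (F (Set.Ioi a)).toReal = mtail F a := rfl
    have hmg : (G (Set.Ioi b)).toReal = mtail G b := rfl
    rw [hmf, hmg]
    have huv : (F (Set.Iic a)).toReal * (G (Set.Iic b)).toReal ≤ 1 := by nlinarith
    have hθuv : θ * ((F (Set.Iic a)).toReal * (G (Set.Iic b)).toReal) ≤ 1 :=
      le_trans (mul_le_mul_of_nonneg_right hθ2 (mul_nonneg hu0 hv0)) (by linarith)
    nlinarith [mul_nonneg hf0 hg0]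
  -- the key induction: joint upper bound in terms of convolution tails
  have key : ∀ N n' m', n' + m' = N → 1 ≤ n' → 1 ≤ m' → ∀ x y : ℝ,
      P {ω | x < ∑ i ∈ Finset.range n', X i ω ∧ y < ∑ i ∈ Finset.range m', Y i ω}
        ≤ 2 ^ (n' + m') * (iterConv F n' (Set.Ioi x) * iterConv G m' (Set.Ioi y)) := by
    intro N
    induction N using Nat.strong_induction_on with
    | _ N IH =>
    intro n' m' hNsum hn1 hm1 x y
    rcases lt_trichotomy n' m' with hlt | heq | hgt
    · -- strip the last Y variable
      obtain ⟨q, rfl⟩ : ∃ q, m' = q + 1 := ⟨m' - 1, by omega⟩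
      have hq : n' ≤ q := by omega
      have hq1 : 1 ≤ q := by omega
      simp only [Finset.sum_range_succ]
      set ν := Measure.map
        (fun ω => ((∑ i ∈ Finset.range n', X i ω, ∑ i ∈ Finset.range q, Y i ω) : ℝ × ℝ)) P
        with hνdef
      haveI : IsProbabilityMeasure ν :=
        Measure.isProbabilityMeasure_map ((hSm n').prodMk (hTm q)).aemeasurable
      have hg : Measurable fun v : (↥(Finset.range q) → ℝ × ℝ) =>
          ((∑ i : ↥(Finset.range q), if (i : ℕ) < n' then (v i).1 else 0, ∑ i : ↥(Finset.range q), (v i).2) : ℝ × ℝ) := by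
        refine Measurable.prodMk (Finset.measurable_sum _ fun i _ => ?_)
          (Finset.measurable_sum _ fun i _ => (measurable_pi_apply i).snd)
        by_cases h : (i : ℕ) < n' <;> simp [h]
        · exact (measurable_pi_apply i).fst
      have h0 := strip_map P (fun i ω => (X i ω, Y i ω)) hmeas hindep q Prod.snd measurable_snd
        (fun v : (↥(Finset.range q) → ℝ × ℝ) =>
          ((∑ i : ↥(Finset.range q), if (i : ℕ) < n' then (v i).1 else 0, ∑ i : ↥(Finset.range q), (v i).2) : ℝ × ℝ)) hg
      simp only [] at h0
      have hfeq : (fun ω : Ω => ((∑ i : ↥(Finset.range q), if (i : ℕ) < n' then X (↑i) ω else 0,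
            ∑ i : ↥(Finset.range q), Y (↑i) ω) : ℝ × ℝ))
          = fun ω => ((∑ i ∈ Finset.range n', X i ω, ∑ i ∈ Finset.range q, Y i ω) : ℝ × ℝ) := by
        funext ω
        have e1 : ∑ i : ↥(Finset.range q), (if (i : ℕ) < n' then X (↑i) ω else 0)
            = ∑ i ∈ Finset.range q, (if i < n' then X i ω else 0) :=
          Finset.sum_coe_sort (Finset.range q) (fun j => if j < n' then X j ω else 0)
        have e2 : ∑ i ∈ Finset.range q, (if i < n' then X i ω else 0)
            = ∑ i ∈ Finset.range n', X i ω := by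
          rw [← Finset.sum_filter]
          congr 1
          ext i
          simp only [Finset.mem_filter, Finset.mem_range]
          omega
        exact congrArg₂ Prod.mk (e1.trans e2) (Finset.sum_coe_sort (Finset.range q) (fun j => Y j ω))
      have hfeq2 : (fun ω : Ω => ((Y q ω : ℝ),
            ((∑ i : ↥(Finset.range q), if (i : ℕ) < n' then X (↑i) ω else 0,
              ∑ i : ↥(Finset.range q), Y (↑i) ω) : ℝ × ℝ)))
          = fun ω : Ω => ((Y q ω : ℝ),
            ((∑ i ∈ Finset.range n', X i ω, ∑ i ∈ Finset.range q, Y i ω) : ℝ × ℝ)) := by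
        funext ω
        exact congrArg _ (congrFun hfeq ω)
      have hYlaw : Measure.map (fun ω => (Y q ω : ℝ)) P = G := by
        rw [← hmargG, ← hid q,
          Measure.map_map measurable_snd (hmeas q)]
        rfl
      rw [hfeq2, hfeq, hYlaw, ← hνdef] at h0
      -- h0 : map (fun ω => (Y q ω, (S_{n'} ω, T_q ω))) P = G.prod ν
      have hEm : MeasurableSet {p : ℝ × (ℝ × ℝ) | x < p.2.1 ∧ y < p.2.2 + p.1} := by
        have hmes : Measurable fun p : ℝ × (ℝ × ℝ) => ((p.2.1, p.2.2 + p.1) : ℝ × ℝ) :=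
          (measurable_snd.fst).prodMk (measurable_snd.snd.add measurable_fst)
        exact hmes (measurableSet_Ioi.prod measurableSet_Ioi)
      have hpairm : Measurable fun ω => ((Y q ω : ℝ),
          ((∑ i ∈ Finset.range n', X i ω, ∑ i ∈ Finset.range q, Y i ω) : ℝ × ℝ)) :=
        (hYm q).prodMk ((hSm n').prodMk (hTm q))
      have hνrect : ∀ u v : ℝ, ν (Set.Ioi u ×ˢ Set.Ioi v)
          = P {ω | u < ∑ i ∈ Finset.range n', X i ω ∧ v < ∑ i ∈ Finset.range q, Y i ω} := by
        intro u v
        rw [hνdef, Measure.map_apply ((hSm n').prodMk (hTm q))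
          (measurableSet_Ioi.prod measurableSet_Ioi)]
        rfl
      calc P {ω | x < ∑ i ∈ Finset.range n', X i ω
            ∧ y < (∑ i ∈ Finset.range q, Y i ω) + Y q ω}
          = (G.prod ν) {p : ℝ × (ℝ × ℝ) | x < p.2.1 ∧ y < p.2.2 + p.1} := by
            rw [← h0, Measure.map_apply hpairm hEm]
            rfl
        _ = ∫⁻ b, ν (Set.Ioi x ×ˢ Set.Ioi (y - b)) ∂G := by
            rw [Measure.prod_apply hEm]
            refine lintegral_congr fun b => ?_
            congr 1
            ext w
            simp only [Set.mem_preimage, Set.mem_setOf_eq, Set.mem_prod, Set.mem_Ioi]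
            constructor <;> rintro ⟨h1, h2⟩ <;> exact ⟨by linarith, by linarith⟩
        _ ≤ ∫⁻ b, 2 ^ (n' + q) * (iterConv F n' (Set.Ioi x)) * (iterConv G q) (Set.Ioi (y - b)) ∂G := by
            refine lintegral_mono fun b => ?_
            rw [hνrect, mul_assoc]
            exact IH (n' + q) (by omega) n' q rfl hn1 hq1 x (y - b)
        _ = 2 ^ (n' + q) * (iterConv F n' (Set.Ioi x)) * ∫⁻ b, (iterConv G q) (Set.Ioi (y - b)) ∂G :=
            lintegral_const_mul' _ _ (ENNReal.mul_ne_top (ENNReal.pow_ne_top ENNReal.ofNat_ne_top)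
              (measure_ne_top _ _))
        _ = 2 ^ (n' + q) * (iterConv F n' (Set.Ioi x)) * (iterConv G (q + 1)) (Set.Ioi y) := by
            rw [← conv_Ioi, Measure.conv_comm]
            rfl
        _ ≤ 2 ^ (n' + (q + 1)) * (iterConv F n' (Set.Ioi x) * iterConv G (q + 1) (Set.Ioi y)) := by
            rw [show n' + (q + 1) = (n' + q) + 1 from by omega, pow_succ]
            calc 2 ^ (n' + q) * (iterConv F n' (Set.Ioi x)) * (iterConv G (q + 1)) (Set.Ioi y)
                = 2 ^ (n' + q) * (iterConv F n' (Set.Ioi x) * iterConv G (q + 1) (Set.Ioi y)) := by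
                  ring
              _ ≤ 2 ^ (n' + q) * 2 * (iterConv F n' (Set.Ioi x) * iterConv G (q + 1) (Set.Ioi y)) :=
                  mul_le_mul_left (le_mul_of_one_le_right zero_le one_le_two) _

    · -- equal indices
      subst heq
      rcases Nat.lt_or_ge n' 2 with h2 | h2
      · -- base case n' = 1
        have hone : n' = 1 := by omega
        subst hone
        simp only [Finset.sum_range_one]
        have hev : {ω | x < X 0 ω ∧ y < Y 0 ω}
            = (fun ω => (X 0 ω, Y 0 ω)) ⁻¹' (Set.Ioi x ×ˢ Set.Ioi y) := rfl
        rw [hev, ← Measure.map_apply (hmeas 0) (measurableSet_Ioi.prod measurableSet_Ioi),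
          hid 0]
        calc μ (Set.Ioi x ×ˢ Set.Ioi y) ≤ 2 * (F (Set.Ioi x) * G (Set.Ioi y)) := hrectU x y
          _ ≤ 2 ^ (1+1) * (iterConv F 1 (Set.Ioi x) * iterConv G 1 (Set.Ioi y)) := by
              rw [iterConv_one, iterConv_one]
              exact mul_le_mul_left (by norm_num) _
      · -- paired step
        obtain ⟨k, rfl⟩ : ∃ k, n' = k + 1 := ⟨n' - 1, by omega⟩
        have hk1 : 1 ≤ k := by omega
        simp only [Finset.sum_range_succ]
        set ν := Measure.map
          (fun ω => ((∑ i ∈ Finset.range k, X i ω, ∑ i ∈ Finset.range k, Y i ω) : ℝ × ℝ)) P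
          with hνdef
        haveI : IsProbabilityMeasure ν :=
          Measure.isProbabilityMeasure_map ((hSm k).prodMk (hTm k)).aemeasurable
        have hg : Measurable fun v : (↥(Finset.range k) → ℝ × ℝ) =>
            ((∑ i, (v i).1, ∑ i, (v i).2) : ℝ × ℝ) := by
          exact Measurable.prodMk
            (Finset.measurable_sum _ fun i _ => (measurable_pi_apply i).fst)
            (Finset.measurable_sum _ fun i _ => (measurable_pi_apply i).snd)
        have h0 := strip_map P (fun i ω => (X i ω, Y i ω)) hmeas hindep k id measurable_id
          (fun v : (↥(Finset.range k) → ℝ × ℝ) => ((∑ i, (v i).1, ∑ i, (v i).2) : ℝ × ℝ)) hg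
        simp only [id_eq] at h0
        have hfeq : (fun ω : Ω => ((∑ i : ↥(Finset.range k), X (↑i) ω,
              ∑ i : ↥(Finset.range k), Y (↑i) ω) : ℝ × ℝ))
            = fun ω => ((∑ i ∈ Finset.range k, X i ω, ∑ i ∈ Finset.range k, Y i ω) : ℝ × ℝ) := by
          funext ω
          exact congrArg₂ Prod.mk (Finset.sum_coe_sort (Finset.range k) (fun j => X j ω))
            (Finset.sum_coe_sort (Finset.range k) (fun j => Y j ω))
        have hfeq2 : (fun ω : Ω => (((X k ω, Y k ω) : ℝ × ℝ),
              ((∑ i : ↥(Finset.range k), X (↑i) ω, ∑ i : ↥(Finset.range k), Y (↑i) ω) : ℝ × ℝ)))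
            = (fun ω : Ω => (((X k ω, Y k ω) : ℝ × ℝ),
              ((∑ i ∈ Finset.range k, X i ω, ∑ i ∈ Finset.range k, Y i ω) : ℝ × ℝ))) := by
          funext ω
          exact congrArg _ (congrArg₂ Prod.mk (Finset.sum_coe_sort (Finset.range k) (fun j => X j ω))
            (Finset.sum_coe_sort (Finset.range k) (fun j => Y j ω)))
        rw [hfeq2, hfeq, hid k, ← hνdef] at h0
        -- h0 : map (fun ω => ((X k ω, Y k ω), (S_k ω, T_k ω))) P = μ.prod ν
        have hEm : MeasurableSet {p : (ℝ × ℝ) × (ℝ × ℝ) | x < p.2.1 + p.1.1 ∧ y < p.2.2 + p.1.2} := by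
          have hmes : Measurable fun p : (ℝ × ℝ) × (ℝ × ℝ) =>
              ((p.2.1 + p.1.1, p.2.2 + p.1.2) : ℝ × ℝ) :=
            (measurable_snd.fst.add measurable_fst.fst).prodMk
              (measurable_snd.snd.add measurable_fst.snd)
          exact hmes (measurableSet_Ioi.prod measurableSet_Ioi)
        have hE'm : MeasurableSet {p : (ℝ × ℝ) × (ℝ × ℝ) | x < p.1.1 + p.2.1 ∧ y < p.1.2 + p.2.2} := by
          have hmes : Measurable fun p : (ℝ × ℝ) × (ℝ × ℝ) =>
              ((p.1.1 + p.2.1, p.1.2 + p.2.2) : ℝ × ℝ) :=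
            (measurable_fst.fst.add measurable_snd.fst).prodMk
              (measurable_fst.snd.add measurable_snd.snd)
          exact hmes (measurableSet_Ioi.prod measurableSet_Ioi)
        have hpairm : Measurable fun ω =>
            (((X k ω, Y k ω) : ℝ × ℝ),
              ((∑ i ∈ Finset.range k, X i ω, ∑ i ∈ Finset.range k, Y i ω) : ℝ × ℝ)) :=
          (hmeas k).prodMk ((hSm k).prodMk (hTm k))
        have hνrect : ∀ u v : ℝ, ν (Set.Ioi u ×ˢ Set.Ioi v)
            = P {ω | u < ∑ i ∈ Finset.range k, X i ω ∧ v < ∑ i ∈ Finset.range k, Y i ω} := by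
          intro u v
          rw [hνdef, Measure.map_apply ((hSm k).prodMk (hTm k))
            (measurableSet_Ioi.prod measurableSet_Ioi)]
          rfl
        have hpt : ∀ z : ℝ × ℝ, ν (Set.Ioi (x - z.1) ×ˢ Set.Ioi (y - z.2))
            ≤ 2 ^ (k + k) * (((iterConv F k).prod (iterConv G k))
              (Set.Ioi (x - z.1) ×ˢ Set.Ioi (y - z.2))) := by
          intro z
          rw [Measure.prod_prod, hνrect]
          exact IH (k + k) (by omega) k k rfl hk1 hk1 (x - z.1) (y - z.2)
        calc P {ω | x < (∑ i ∈ Finset.range k, X i ω) + X k ω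
              ∧ y < (∑ i ∈ Finset.range k, Y i ω) + Y k ω}
            = (μ.prod ν) {p : (ℝ × ℝ) × (ℝ × ℝ) | x < p.2.1 + p.1.1 ∧ y < p.2.2 + p.1.2} := by
              rw [← h0, Measure.map_apply hpairm hEm]
              rfl
          _ = ∫⁻ z, ν (Set.Ioi (x - z.1) ×ˢ Set.Ioi (y - z.2)) ∂μ := by
              rw [Measure.prod_apply hEm]
              refine lintegral_congr fun z => ?_
              congr 1
              ext w
              simp only [Set.mem_preimage, Set.mem_setOf_eq, Set.mem_prod, Set.mem_Ioi]
              constructor <;> rintro ⟨h1, h2⟩ <;> exact ⟨by linarith, by linarith⟩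
          _ ≤ ∫⁻ z, 2 ^ (k + k) * (((iterConv F k).prod (iterConv G k))
                (Set.Ioi (x - z.1) ×ˢ Set.Ioi (y - z.2))) ∂μ := lintegral_mono hpt
          _ = 2 ^ (k + k) * ∫⁻ z, ((iterConv F k).prod (iterConv G k))
                (Set.Ioi (x - z.1) ×ˢ Set.Ioi (y - z.2)) ∂μ :=
              lintegral_const_mul' _ _ (ENNReal.pow_ne_top ENNReal.ofNat_ne_top)
          _ = 2 ^ (k + k) * (μ.prod ((iterConv F k).prod (iterConv G k)))
                {p : (ℝ × ℝ) × (ℝ × ℝ) | x < p.1.1 + p.2.1 ∧ y < p.1.2 + p.2.2} := by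
              rw [Measure.prod_apply hE'm]
              congr 1
              refine lintegral_congr fun z => ?_
              congr 1
              ext w
              simp only [Set.mem_preimage, Set.mem_setOf_eq, Set.mem_prod, Set.mem_Ioi]
              constructor <;> rintro ⟨h1, h2⟩ <;> exact ⟨by linarith, by linarith⟩
          _ = 2 ^ (k + k) * (((iterConv F k).prod (iterConv G k)).prod μ)
                (Prod.swap ⁻¹' {p : (ℝ × ℝ) × (ℝ × ℝ) | x < p.1.1 + p.2.1 ∧ y < p.1.2 + p.2.2}) := by
              rw [← Measure.prod_swap, Measure.map_apply measurable_swap hE'm]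
          _ = 2 ^ (k + k) * ∫⁻ w, μ (Set.Ioi (x - w.1) ×ˢ Set.Ioi (y - w.2))
                ∂((iterConv F k).prod (iterConv G k)) := by
              rw [Measure.prod_apply (measurable_swap hE'm)]
              congr 1
              refine lintegral_congr fun w => ?_
              congr 1
              ext z
              simp only [Set.mem_preimage, Set.mem_setOf_eq, Set.mem_prod, Set.mem_Ioi,
                Prod.swap_prod_mk]
              constructor <;> rintro ⟨h1, h2⟩ <;> exact ⟨by linarith, by linarith⟩
          _ ≤ 2 ^ (k + k) * ∫⁻ w, 2 * (F (Set.Ioi (x - w.1)) * G (Set.Ioi (y - w.2)))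
                ∂((iterConv F k).prod (iterConv G k)) :=
              mul_le_mul_right (lintegral_mono fun w => hrectU _ _) _
          _ = 2 ^ (k + k) * (2 * ((∫⁻ r, F (Set.Ioi (x - r)) ∂(iterConv F k))
                * (∫⁻ q, G (Set.Ioi (y - q)) ∂(iterConv G k)))) := by
              rw [lintegral_const_mul' _ _ ENNReal.ofNat_ne_top,
                lintegral_prod_mul (measurable_tail_shift F x).aemeasurable
                  (measurable_tail_shift G y).aemeasurable]
          _ = 2 ^ (k + k) * (2 * (iterConv F (k+1) (Set.Ioi x) * iterConv G (k+1) (Set.Ioi y))) := by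
              rw [← conv_Ioi, ← conv_Ioi]
              rfl
          _ ≤ 2 ^ (k + 1 + (k + 1)) * (iterConv F (k+1) (Set.Ioi x) * iterConv G (k+1) (Set.Ioi y)) := by
              rw [show k + 1 + (k + 1) = (k + k) + 1 + 1 from by omega, pow_succ, pow_succ]
              calc (2:ℝ≥0∞) ^ (k+k) * (2 * (iterConv F (k+1) (Set.Ioi x) * iterConv G (k+1) (Set.Ioi y)))
                  = 2 ^ (k+k) * 2 * (iterConv F (k+1) (Set.Ioi x) * iterConv G (k+1) (Set.Ioi y)) := by
                    ring
                _ ≤ 2 ^ (k+k) * 2 * 2 * (iterConv F (k+1) (Set.Ioi x) * iterConv G (k+1) (Set.Ioi y)) := by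
                    exact mul_le_mul_left (le_mul_of_one_le_right zero_le one_le_two) _

    · -- strip the last X variable
      obtain ⟨p, rfl⟩ : ∃ p, n' = p + 1 := ⟨n' - 1, by omega⟩
      have hp : m' ≤ p := by omega
      have hp1 : 1 ≤ p := by omega
      simp only [Finset.sum_range_succ]
      set ν := Measure.map
        (fun ω => ((∑ i ∈ Finset.range p, X i ω, ∑ i ∈ Finset.range m', Y i ω) : ℝ × ℝ)) P
        with hνdef
      haveI : IsProbabilityMeasure ν :=
        Measure.isProbabilityMeasure_map ((hSm p).prodMk (hTm m')).aemeasurable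
      have hg : Measurable fun v : (↥(Finset.range p) → ℝ × ℝ) =>
          ((∑ i : ↥(Finset.range p), (v i).1,
            ∑ i : ↥(Finset.range p), if (i : ℕ) < m' then (v i).2 else 0) : ℝ × ℝ) := by
        refine Measurable.prodMk (Finset.measurable_sum _ fun i _ => (measurable_pi_apply i).fst)
          (Finset.measurable_sum _ fun i _ => ?_)
        by_cases h : (i : ℕ) < m' <;> simp [h]
        · exact (measurable_pi_apply i).snd
      have h0 := strip_map P (fun i ω => (X i ω, Y i ω)) hmeas hindep p Prod.fst measurable_fst
        (fun v : (↥(Finset.range p) → ℝ × ℝ) =>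
          ((∑ i : ↥(Finset.range p), (v i).1,
            ∑ i : ↥(Finset.range p), if (i : ℕ) < m' then (v i).2 else 0) : ℝ × ℝ)) hg
      simp only [] at h0
      have hfeq : (fun ω : Ω => ((∑ i : ↥(Finset.range p), X (↑i) ω,
            ∑ i : ↥(Finset.range p), if (i : ℕ) < m' then Y (↑i) ω else 0) : ℝ × ℝ))
          = fun ω => ((∑ i ∈ Finset.range p, X i ω, ∑ i ∈ Finset.range m', Y i ω) : ℝ × ℝ) := by
        funext ω
        have e1 : ∑ i : ↥(Finset.range p), (if (i : ℕ) < m' then Y (↑i) ω else 0)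
            = ∑ i ∈ Finset.range p, (if i < m' then Y i ω else 0) :=
          Finset.sum_coe_sort (Finset.range p) (fun j => if j < m' then Y j ω else 0)
        have e2 : ∑ i ∈ Finset.range p, (if i < m' then Y i ω else 0)
            = ∑ i ∈ Finset.range m', Y i ω := by
          rw [← Finset.sum_filter]
          congr 1
          ext i
          simp only [Finset.mem_filter, Finset.mem_range]
          omega
        exact congrArg₂ Prod.mk (Finset.sum_coe_sort (Finset.range p) (fun j => X j ω))
          (e1.trans e2)
      have hfeq2 : (fun ω : Ω => ((X p ω : ℝ),
            ((∑ i : ↥(Finset.range p), X (↑i) ω,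
              ∑ i : ↥(Finset.range p), if (i : ℕ) < m' then Y (↑i) ω else 0) : ℝ × ℝ)))
          = fun ω : Ω => ((X p ω : ℝ),
            ((∑ i ∈ Finset.range p, X i ω, ∑ i ∈ Finset.range m', Y i ω) : ℝ × ℝ)) := by
        funext ω
        exact congrArg _ (congrFun hfeq ω)
      have hXlaw : Measure.map (fun ω => (X p ω : ℝ)) P = F := by
        rw [← hmargF, ← hid p,
          Measure.map_map measurable_fst (hmeas p)]
        rfl
      rw [hfeq2, hfeq, hXlaw, ← hνdef] at h0
      have hEm : MeasurableSet {r : ℝ × (ℝ × ℝ) | x < r.2.1 + r.1 ∧ y < r.2.2} := by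
        have hmes : Measurable fun r : ℝ × (ℝ × ℝ) => ((r.2.1 + r.1, r.2.2) : ℝ × ℝ) :=
          (measurable_snd.fst.add measurable_fst).prodMk measurable_snd.snd
        exact hmes (measurableSet_Ioi.prod measurableSet_Ioi)
      have hpairm : Measurable fun ω => ((X p ω : ℝ),
          ((∑ i ∈ Finset.range p, X i ω, ∑ i ∈ Finset.range m', Y i ω) : ℝ × ℝ)) :=
        (hXm p).prodMk ((hSm p).prodMk (hTm m'))
      have hνrect : ∀ u v : ℝ, ν (Set.Ioi u ×ˢ Set.Ioi v)
          = P {ω | u < ∑ i ∈ Finset.range p, X i ω ∧ v < ∑ i ∈ Finset.range m', Y i ω} := by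
        intro u v
        rw [hνdef, Measure.map_apply ((hSm p).prodMk (hTm m'))
          (measurableSet_Ioi.prod measurableSet_Ioi)]
        rfl
      calc P {ω | x < (∑ i ∈ Finset.range p, X i ω) + X p ω
            ∧ y < ∑ i ∈ Finset.range m', Y i ω}
          = (F.prod ν) {r : ℝ × (ℝ × ℝ) | x < r.2.1 + r.1 ∧ y < r.2.2} := by
            rw [← h0, Measure.map_apply hpairm hEm]
            rfl
        _ = ∫⁻ a, ν (Set.Ioi (x - a) ×ˢ Set.Ioi y) ∂F := by
            rw [Measure.prod_apply hEm]
            refine lintegral_congr fun a => ?_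
            congr 1
            ext w
            simp only [Set.mem_preimage, Set.mem_setOf_eq, Set.mem_prod, Set.mem_Ioi]
            constructor <;> rintro ⟨h1, h2⟩ <;> exact ⟨by linarith, by linarith⟩
        _ ≤ ∫⁻ a, 2 ^ (p + m') * (iterConv G m' (Set.Ioi y)) * (iterConv F p) (Set.Ioi (x - a)) ∂F := by
            refine lintegral_mono fun a => ?_
            rw [hνrect]
            calc P {ω | x - a < ∑ i ∈ Finset.range p, X i ω ∧ y < ∑ i ∈ Finset.range m', Y i ω}
                ≤ 2 ^ (p + m') * (iterConv F p (Set.Ioi (x - a)) * iterConv G m' (Set.Ioi y)) :=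
                  IH (p + m') (by omega) p m' rfl hp1 hm1 (x - a) y
              _ = 2 ^ (p + m') * (iterConv G m' (Set.Ioi y)) * (iterConv F p) (Set.Ioi (x - a)) := by
                  ring
        _ = 2 ^ (p + m') * (iterConv G m' (Set.Ioi y)) * ∫⁻ a, (iterConv F p) (Set.Ioi (x - a)) ∂F :=
            lintegral_const_mul' _ _ (ENNReal.mul_ne_top (ENNReal.pow_ne_top ENNReal.ofNat_ne_top)
              (measure_ne_top _ _))
        _ = 2 ^ (p + m') * (iterConv G m' (Set.Ioi y)) * (iterConv F (p + 1)) (Set.Ioi x) := by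
            rw [← conv_Ioi, Measure.conv_comm]
            rfl
        _ ≤ 2 ^ (p + 1 + m') * (iterConv F (p + 1) (Set.Ioi x) * iterConv G m' (Set.Ioi y)) := by
            rw [show p + 1 + m' = (p + m') + 1 from by omega, pow_succ]
            calc 2 ^ (p + m') * (iterConv G m' (Set.Ioi y)) * (iterConv F (p + 1)) (Set.Ioi x)
                = 2 ^ (p + m') * (iterConv F (p + 1) (Set.Ioi x) * iterConv G m' (Set.Ioi y)) := by
                  ring
              _ ≤ 2 ^ (p + m') * 2 * (iterConv F (p + 1) (Set.Ioi x) * iterConv G m' (Set.Ioi y)) :=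
                  mul_le_mul_left (le_mul_of_one_le_right zero_le one_le_two) _

  -- global convolution domination constants
  have hDF : ∃ D : ℝ≥0∞, D ≠ ⊤ ∧ ∀ x, (F.conv F) (Set.Ioi x) ≤ D * F (Set.Ioi x) := by
    have hev : ∀ᶠ x in atTop, mtail (F.conv F) x / mtail F x ≤ 2 * mgfAt F γ + 1 :=
      hSF.2.eventually_le_const (lt_add_one _)
    obtain ⟨M0, hM0⟩ := hev.exists_forall_of_atTop
    refine global_dom (F.conv F) F hFpos M0 (2 * mgfAt F γ + 1) fun x hx => ?_
    have h1 := hM0 x hx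
    rw [div_le_iff₀ (hFpos x)] at h1
    linarith
  have hDG : ∃ D : ℝ≥0∞, D ≠ ⊤ ∧ ∀ x, (G.conv G) (Set.Ioi x) ≤ D * G (Set.Ioi x) := by
    have hev : ∀ᶠ x in atTop, mtail (G.conv G) x / mtail G x ≤ 2 * mgfAt G γ + 1 :=
      hSG.2.eventually_le_const (lt_add_one _)
    obtain ⟨M0, hM0⟩ := hev.exists_forall_of_atTop
    refine global_dom (G.conv G) G hGpos M0 (2 * mgfAt G γ + 1) fun x hx => ?_
    have h1 := hM0 x hx
    rw [div_le_iff₀ (hGpos x)] at h1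
    linarith
  obtain ⟨DF, hDFt, hDFb⟩ := hDF
  obtain ⟨DG, hDGt, hDGb⟩ := hDG
  have hDFt' : DF + 1 ≠ ⊤ := ENNReal.add_ne_top.mpr ⟨hDFt, ENNReal.one_ne_top⟩
  have hDGt' : DG + 1 ≠ ⊤ := ENNReal.add_ne_top.mpr ⟨hDGt, ENNReal.one_ne_top⟩
  have hAn := iterConv_dom F hDFt' le_add_self
    (fun x => (hDFb x).trans (mul_le_mul_left le_self_add _)) n (by omega)
  have hBm := iterConv_dom G hDGt' le_add_self
    (fun x => (hDGb x).trans (mul_le_mul_left le_self_add _)) m (by omega)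
  obtain ⟨UC, hUC⟩ : ∃ u : ℝ≥0∞, u = 2 ^ (n + m) * (DF + 1) ^ n * (DG + 1) ^ m := ⟨_, rfl⟩
  have hUCt : UC ≠ ⊤ := by
    rw [hUC]
    exact ENNReal.mul_ne_top (ENNReal.mul_ne_top (ENNReal.pow_ne_top ENNReal.ofNat_ne_top)
      (ENNReal.pow_ne_top hDFt')) (ENNReal.pow_ne_top hDGt')
  have hupper : ∀ x y : ℝ,
      (P {ω | x < ∑ i ∈ Finset.range n, X i ω ∧ y < ∑ i ∈ Finset.range m, Y i ω}).toReal
        ≤ UC.toReal * (mtail F x * mtail G y) := by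
    intro x y
    have h2 : P {ω | x < ∑ i ∈ Finset.range n, X i ω ∧ y < ∑ i ∈ Finset.range m, Y i ω}
        ≤ UC * (F (Set.Ioi x) * G (Set.Ioi y)) := by
      calc P {ω | x < ∑ i ∈ Finset.range n, X i ω ∧ y < ∑ i ∈ Finset.range m, Y i ω}
          ≤ 2 ^ (n + m) * (iterConv F n (Set.Ioi x) * iterConv G m (Set.Ioi y)) :=
            key (n + m) n m rfl (by omega) (by omega) x y
        _ ≤ 2 ^ (n + m) * (((DF + 1) ^ n * F (Set.Ioi x)) * ((DG + 1) ^ m * G (Set.Ioi y))) :=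
            mul_le_mul_right (mul_le_mul' (hAn x) (hBm y)) _
        _ = UC * (F (Set.Ioi x) * G (Set.Ioi y)) := by rw [hUC]; ring
    calc (P {ω | x < ∑ i ∈ Finset.range n, X i ω ∧ y < ∑ i ∈ Finset.range m, Y i ω}).toReal
        ≤ (UC * (F (Set.Ioi x) * G (Set.Ioi y))).toReal :=
          ENNReal.toReal_mono (ENNReal.mul_ne_top hUCt
            (ENNReal.mul_ne_top (measure_ne_top _ _) (measure_ne_top _ _))) h2
      _ = UC.toReal * (mtail F x * mtail G y) := by
          have hin : (F (Set.Ioi x) * G (Set.Ioi y)).toReal = mtail F x * mtail G y := by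
            rw [ENNReal.toReal_mul]; rfl
          rw [ENNReal.toReal_mul, hin]
  -- lower bound machinery
  obtain ⟨cF, hcFpos, hcFsm⟩ := Iic_small F
  obtain ⟨cG, hcGpos, hcGsm⟩ := Iic_small G
  set c : ℝ := max cF cG with hcdef
  have hc0 : 0 < c := lt_of_lt_of_le hcFpos (le_max_left _ _)
  have hFc : (F (Set.Iic (-c))).toReal ≤ 1/4 :=
    le_trans (ENNReal.toReal_mono (measure_ne_top _ _)
      (measure_mono (Set.Iic_subset_Iic.mpr (neg_le_neg (le_max_left _ _))))) hcFsm
  have hGc : (G (Set.Iic (-c))).toReal ≤ 1/4 :=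
    le_trans (ENNReal.toReal_mono (measure_ne_top _ _)
      (measure_mono (Set.Iic_subset_Iic.mpr (neg_le_neg (le_max_right _ _))))) hcGsm
  set k : ℕ := max n m with hkdef
  have hkn : n ≤ k := le_max_left _ _
  have hkm : m ≤ k := le_max_right _ _
  have hk2 : 2 ≤ k := le_trans hn hkn
  set d : ℝ := (k : ℝ) * c with hddef
  -- generic bounds on F(Iic)/G(Iic) in [0,1]
  have hiicF : ∀ t : ℝ, 0 ≤ (F (Set.Iic t)).toReal ∧ (F (Set.Iic t)).toReal ≤ 1 := by
    intro t
    refine ⟨ENNReal.toReal_nonneg, ?_⟩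
    rw [hcF]; linarith [mtail_nonneg F t]
  have hiicG : ∀ t : ℝ, 0 ≤ (G (Set.Iic t)).toReal ∧ (G (Set.Iic t)).toReal ≤ 1 := by
    intro t
    refine ⟨ENNReal.toReal_nonneg, ?_⟩
    rw [hcG]; linarith [mtail_nonneg G t]
  -- per-pair probability lower bounds
  have hP0 : ∀ t : ℝ, mtail F t / 2 ≤ (μ (Set.Ioi t ×ˢ Set.Ioi (-c))).toReal := by
    intro t
    rw [hrectR]
    obtain ⟨hu0, hu1⟩ := hiicF t
    obtain ⟨hv0, hv1⟩ := hiicG (-c)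
    have hmg : mtail G (-c) = 1 - (G (Set.Iic (-c))).toReal := by rw [hcG]; ring
    have h1 : 1 + θ * (F (Set.Iic t)).toReal * (G (Set.Iic (-c))).toReal
        ≥ 1 - (F (Set.Iic t)).toReal * (G (Set.Iic (-c))).toReal := by
      nlinarith [mul_nonneg hu0 hv0]
    have h2 : (F (Set.Iic t)).toReal * (G (Set.Iic (-c))).toReal ≤ (G (Set.Iic (-c))).toReal := by
      nlinarith
    have h3 : 1 + θ * (F (Set.Iic t)).toReal * (G (Set.Iic (-c))).toReal ≥ 3/4 := by linarith
    have h4 : mtail G (-c) ≥ 3/4 := by rw [hmg]; linarith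
    have h5 : mtail G (-c) * (1 + θ * (F (Set.Iic t)).toReal * (G (Set.Iic (-c))).toReal)
        ≥ 9/16 := by nlinarith
    nlinarith [mtail_nonneg F t]
  have hP1 : ∀ t : ℝ, mtail G t / 2 ≤ (μ (Set.Ioi (-c) ×ˢ Set.Ioi t)).toReal := by
    intro t
    rw [hrectR]
    obtain ⟨hu0, hu1⟩ := hiicF (-c)
    obtain ⟨hv0, hv1⟩ := hiicG t
    have hmf : mtail F (-c) = 1 - (F (Set.Iic (-c))).toReal := by rw [hcF]; ring
    have h1 : 1 + θ * (F (Set.Iic (-c))).toReal * (G (Set.Iic t)).toReal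
        ≥ 1 - (F (Set.Iic (-c))).toReal * (G (Set.Iic t)).toReal := by
      nlinarith [mul_nonneg hu0 hv0]
    have h2 : (F (Set.Iic (-c))).toReal * (G (Set.Iic t)).toReal
        ≤ (F (Set.Iic (-c))).toReal := by nlinarith
    have h3 : 1 + θ * (F (Set.Iic (-c))).toReal * (G (Set.Iic t)).toReal ≥ 3/4 := by linarith
    have h4 : mtail F (-c) ≥ 3/4 := by rw [hmf]; linarith
    have h5 : mtail F (-c) * (1 + θ * (F (Set.Iic (-c))).toReal * (G (Set.Iic t)).toReal)
        ≥ 9/16 := by nlinarith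
    have hgoal : mtail F (-c) * mtail G t * (1 + θ * (F (Set.Iic (-c))).toReal * (G (Set.Iic t)).toReal)
        = mtail G t * (mtail F (-c) * (1 + θ * (F (Set.Iic (-c))).toReal * (G (Set.Iic t)).toReal)) := by
      ring
    rw [hgoal]
    nlinarith [mtail_nonneg G t]
  have hP2 : (1:ℝ)/2 ≤ (μ (Set.Ioi (-c) ×ˢ Set.Ioi (-c))).toReal := by
    rw [hrectR]
    obtain ⟨hu0, hu1⟩ := hiicF (-c)
    obtain ⟨hv0, hv1⟩ := hiicG (-c)
    have hmf : mtail F (-c) = 1 - (F (Set.Iic (-c))).toReal := by rw [hcF]; ring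
    have hmg : mtail G (-c) = 1 - (G (Set.Iic (-c))).toReal := by rw [hcG]; ring
    have h1 : 1 + θ * (F (Set.Iic (-c))).toReal * (G (Set.Iic (-c))).toReal
        ≥ 1 - (F (Set.Iic (-c))).toReal * (G (Set.Iic (-c))).toReal := by
      nlinarith [mul_nonneg hu0 hv0]
    have huv : (F (Set.Iic (-c))).toReal * (G (Set.Iic (-c))).toReal ≤ 1/16 := by
      nlinarith [hFc, hGc]
    have h3 : 1 + θ * (F (Set.Iic (-c))).toReal * (G (Set.Iic (-c))).toReal ≥ 15/16 := by
      linarith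
    have h4 : mtail F (-c) ≥ 3/4 := by rw [hmf]; linarith
    have h5 : mtail G (-c) ≥ 3/4 := by rw [hmg]; linarith
    have h6 : mtail F (-c) * mtail G (-c) ≥ 9/16 := by nlinarith
    nlinarith [h6, h3]
  -- the lower bound for all x, y (with shifted arguments)
  have hlow : ∀ x y : ℝ, (1/2:ℝ)^k * (mtail F (x + d) * mtail G (y + d))
      ≤ (P {ω | x < ∑ i ∈ Finset.range n, X i ω
          ∧ y < ∑ i ∈ Finset.range m, Y i ω}).toReal := by
    intro x y
    set s : ℕ → Set (ℝ × ℝ) := fun i =>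
      if i = 0 then Set.Ioi (x + d) ×ˢ Set.Ioi (-c)
      else if i = 1 then Set.Ioi (-c) ×ˢ Set.Ioi (y + d)
      else Set.Ioi (-c) ×ˢ Set.Ioi (-c) with hsdef
    have hs0 : s 0 = Set.Ioi (x + d) ×ˢ Set.Ioi (-c) := by simp [hsdef]
    have hs1 : s 1 = Set.Ioi (-c) ×ˢ Set.Ioi (y + d) := by simp [hsdef]
    have hsi : ∀ i : ℕ, i ≠ 0 → i ≠ 1 → s i = Set.Ioi (-c) ×ˢ Set.Ioi (-c) := by
      intro i h0 h1
      simp [hsdef, h0, h1]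
    have hsm : ∀ i, MeasurableSet (s i) := by
      intro i
      simp only [hsdef]
      split_ifs <;> exact measurableSet_Ioi.prod measurableSet_Ioi
    have hprod : P (⋂ i ∈ Finset.range k, (fun ω => (X i ω, Y i ω)) ⁻¹' s i)
        = ∏ i ∈ Finset.range k, μ (s i) := by
      rw [hindep.meas_biInter (S := Finset.range k)
        (s := fun i => (fun ω => (X i ω, Y i ω)) ⁻¹' s i) (fun i _ => ⟨s i, hsm i, rfl⟩)]
      exact Finset.prod_congr rfl fun i _ => by
        rw [← hid i, Measure.map_apply (hmeas i) (hsm i)]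
    have hsub : (⋂ i ∈ Finset.range k, (fun ω => (X i ω, Y i ω)) ⁻¹' s i)
        ⊆ {ω | x < ∑ i ∈ Finset.range n, X i ω ∧ y < ∑ i ∈ Finset.range m, Y i ω} := by
      intro ω hω
      simp only [Set.mem_iInter, Set.mem_preimage] at hω
      have h0w := hω 0 (Finset.mem_range.mpr (by omega))
      have h1w := hω 1 (Finset.mem_range.mpr (by omega))
      rw [hs0] at h0w
      rw [hs1] at h1w
      have hX0 : x + d < X 0 ω := h0w.1
      have hY1 : y + d < Y 1 ω := h1w.2
      have hXother : ∀ i, i ∈ Finset.range k → i ≠ 0 → -c < X i ω := by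
        intro i hik hi0
        have h := hω i hik
        by_cases hi1 : i = 1
        · subst hi1
          rw [hs1] at h
          exact h.1
        · rw [hsi i hi0 hi1] at h
          exact h.1
      have hYother : ∀ i, i ∈ Finset.range k → i ≠ 1 → -c < Y i ω := by
        intro i hik hi1
        have h := hω i hik
        by_cases hi0 : i = 0
        · subst hi0
          rw [hs0] at h
          exact h.2
        · rw [hsi i hi0 hi1] at h
          exact h.2
      constructor
      · have hmem0 : (0:ℕ) ∈ Finset.range n := Finset.mem_range.mpr (by omega)
        have hsplit := Finset.add_sum_erase (Finset.range n) (fun i => X i ω) hmem0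
        have hsum_ge : ∑ _i ∈ (Finset.range n).erase 0, (-c)
            ≤ ∑ i ∈ (Finset.range n).erase 0, X i ω := by
          refine Finset.sum_le_sum fun i hi => ?_
          have hik : i ∈ Finset.range k := Finset.mem_range.mpr
            (lt_of_lt_of_le (Finset.mem_range.mp (Finset.mem_of_mem_erase hi)) hkn)
          exact (hXother i hik (Finset.ne_of_mem_erase hi)).le
        rw [Finset.sum_const, Finset.card_erase_of_mem hmem0, Finset.card_range,
          nsmul_eq_mul] at hsum_ge
        have hcard : ((n - 1 : ℕ) : ℝ) ≤ (k : ℝ) := Nat.cast_le.mpr (by omega)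
        have hmul : ((n - 1 : ℕ) : ℝ) * c ≤ (k : ℝ) * c :=
          mul_le_mul_of_nonneg_right hcard hc0.le
        have hdd : d = (k : ℝ) * c := hddef
        show x < ∑ i ∈ Finset.range n, X i ω
        linarith [hsplit, hX0, hsum_ge, hmul]
      · have hmem1 : (1:ℕ) ∈ Finset.range m := Finset.mem_range.mpr (by omega)
        have hsplit := Finset.add_sum_erase (Finset.range m) (fun i => Y i ω) hmem1
        have hsum_ge : ∑ _i ∈ (Finset.range m).erase 1, (-c)
            ≤ ∑ i ∈ (Finset.range m).erase 1, Y i ω := by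
          refine Finset.sum_le_sum fun i hi => ?_
          have hik : i ∈ Finset.range k := Finset.mem_range.mpr
            (lt_of_lt_of_le (Finset.mem_range.mp (Finset.mem_of_mem_erase hi)) hkm)
          exact (hYother i hik (Finset.ne_of_mem_erase hi)).le
        rw [Finset.sum_const, Finset.card_erase_of_mem hmem1, Finset.card_range,
          nsmul_eq_mul] at hsum_ge
        have hcard : ((m - 1 : ℕ) : ℝ) ≤ (k : ℝ) := Nat.cast_le.mpr (by omega)
        have hmul : ((m - 1 : ℕ) : ℝ) * c ≤ (k : ℝ) * c :=
          mul_le_mul_of_nonneg_right hcard hc0.le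
        have hdd : d = (k : ℝ) * c := hddef
        show y < ∑ i ∈ Finset.range m, Y i ω
        linarith [hsplit, hY1, hsum_ge, hmul]
    -- product comparison
    set e : ℕ → ℝ := fun i =>
      if i = 0 then mtail F (x + d) else if i = 1 then mtail G (y + d) else 1 with hedef
    have he0 : e 0 = mtail F (x + d) := by simp [hedef]
    have he1 : e 1 = mtail G (y + d) := by simp [hedef]
    have hei : ∀ i : ℕ, i ≠ 0 → i ≠ 1 → e i = 1 := by
      intro i h0 h1
      simp [hedef, h0, h1]
    have he_nonneg : ∀ i, 0 ≤ (1/2:ℝ) * e i := by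
      intro i
      simp only [hedef]
      split_ifs <;> nlinarith [mtail_nonneg F (x + d), mtail_nonneg G (y + d)]
    have hbnd : ∀ i ∈ Finset.range k, (1/2:ℝ) * e i ≤ (μ (s i)).toReal := by
      intro i _
      by_cases h0 : i = 0
      · subst h0
        rw [hs0, he0]
        linarith [hP0 (x + d)]
      · by_cases h1 : i = 1
        · subst h1
          rw [hs1, he1]
          linarith [hP1 (y + d)]
        · rw [hsi i h0 h1, hei i h0 h1]
          linarith [hP2]
    have hprodle : ∏ i ∈ Finset.range k, ((1/2:ℝ) * e i)
        ≤ ∏ i ∈ Finset.range k, (μ (s i)).toReal :=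
      Finset.prod_le_prod (fun i _ => he_nonneg i) hbnd
    have hprode : ∏ i ∈ Finset.range k, ((1/2:ℝ) * e i)
        = (1/2:ℝ)^k * (mtail F (x + d) * mtail G (y + d)) := by
      rw [Finset.prod_mul_distrib, Finset.prod_const, Finset.card_range]
      congr 1
      have hsub01 : ({0, 1} : Finset ℕ) ⊆ Finset.range k := by
        intro i hi
        simp only [Finset.mem_insert, Finset.mem_singleton] at hi
        rcases hi with h | h <;> exact Finset.mem_range.mpr (by omega)
      rw [← Finset.prod_subset hsub01 (fun i _ hni => hei i
        (fun h => hni (by simp [h])) (fun h => hni (by simp [h])))]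
      rw [Finset.prod_insert (by simp), Finset.prod_singleton, he0, he1]
    calc (1/2:ℝ)^k * (mtail F (x + d) * mtail G (y + d))
        = ∏ i ∈ Finset.range k, ((1/2:ℝ) * e i) := hprode.symm
      _ ≤ ∏ i ∈ Finset.range k, (μ (s i)).toReal := hprodle
      _ = (P (⋂ i ∈ Finset.range k, (fun ω => (X i ω, Y i ω)) ⁻¹' s i)).toReal := by
          rw [hprod, ENNReal.toReal_prod]
      _ ≤ (P {ω | x < ∑ i ∈ Finset.range n, X i ω
            ∧ y < ∑ i ∈ Finset.range m, Y i ω}).toReal :=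
          ENNReal.toReal_mono (measure_ne_top _ _) (measure_mono hsub)
  -- shifted tail comparison
  obtain ⟨cF', hcF'pos, MF, hMF⟩ := memL_shift hSF.1 d
  obtain ⟨cG', hcG'pos, MG, hMG⟩ := memL_shift hSG.1 d
  have hLpos : (0:ℝ) < (1/2:ℝ)^k * (cF' * cG') := by positivity
  refine ⟨max (max UC.toReal (((1/2:ℝ)^k * (cF' * cG'))⁻¹)) 2,
    lt_of_lt_of_le one_lt_two (le_max_right _ _), max MF MG, fun x hx y hy => ?_⟩
  have hxF : MF ≤ x := le_trans (le_max_left _ _) hx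
  have hyG : MG ≤ y := le_trans (le_max_right _ _) hy
  have hCpos : (0:ℝ) < max (max UC.toReal (((1/2:ℝ)^k * (cF' * cG'))⁻¹)) 2 :=
    lt_of_lt_of_le two_pos (le_max_right _ _)
  constructor
  · have hCge : ((1/2:ℝ)^k * (cF' * cG'))⁻¹
        ≤ max (max UC.toReal (((1/2:ℝ)^k * (cF' * cG'))⁻¹)) 2 :=
      le_trans (le_max_right _ _) (le_max_left _ _)
    have h1C : 1 / max (max UC.toReal (((1/2:ℝ)^k * (cF' * cG'))⁻¹)) 2
        ≤ (1/2:ℝ)^k * (cF' * cG') := by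
      rw [one_div]
      calc (max (max UC.toReal (((1/2:ℝ)^k * (cF' * cG'))⁻¹)) 2)⁻¹
          ≤ (((1/2:ℝ)^k * (cF' * cG'))⁻¹)⁻¹ :=
            inv_anti₀ (inv_pos.mpr hLpos) hCge
        _ = (1/2:ℝ)^k * (cF' * cG') := inv_inv _
    calc 1 / max (max UC.toReal (((1/2:ℝ)^k * (cF' * cG'))⁻¹)) 2 * (mtail F x * mtail G y)
        ≤ ((1/2:ℝ)^k * (cF' * cG')) * (mtail F x * mtail G y) :=
          mul_le_mul_of_nonneg_right h1C (mul_nonneg (mtail_nonneg _ _) (mtail_nonneg _ _))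
      _ = (1/2:ℝ)^k * ((cF' * mtail F x) * (cG' * mtail G y)) := by ring
      _ ≤ (1/2:ℝ)^k * (mtail F (x + d) * mtail G (y + d)) := by
          refine mul_le_mul_of_nonneg_left ?_ (by positivity)
          exact mul_le_mul (hMF x hxF) (hMG y hyG)
            (mul_nonneg hcG'pos.le (mtail_nonneg _ _)) (mtail_nonneg _ _)
      _ ≤ (P {ω | x < ∑ i ∈ Finset.range n, X i ω
            ∧ y < ∑ i ∈ Finset.range m, Y i ω}).toReal := hlow x y
  · calc (P {ω | x < ∑ i ∈ Finset.range n, X i ω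
          ∧ y < ∑ i ∈ Finset.range m, Y i ω}).toReal
        ≤ UC.toReal * (mtail F x * mtail G y) := hupper x y
      _ ≤ max (max UC.toReal (((1/2:ℝ)^k * (cF' * cG'))⁻¹)) 2 * (mtail F x * mtail G y) :=
          mul_le_mul_of_nonneg_right (le_trans (le_max_left _ _) (le_max_left _ _))
            (mul_nonneg (mtail_nonneg _ _) (mtail_nonneg _ _))
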